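/- Let B be an n×m matrix over F₂, z ∈ F₂ⁿ, k a positive integer, γ ≥ 1 a real number, and a a positive integer with (a : ℝ) > γ·k. Let A be the (a·n)×m matrix over F₂ obtained by vertically stacking a copies of B, and y ∈ F₂^{a·n} the vector obtained by stacking a copies of z. Then: (1) if there exists x ∈ F₂^m with ‖x‖₀ ≤ k and B·x = z, then there exists x ∈ F₂^m with ‖A·x − y‖₀ + ‖x‖₀ ≤ k; and (2) if B·x ≠ z for every x ∈ F₂^m with ‖x‖₀ ≤ γ·k, then ‖A·x − y‖₀ + ‖x‖₀ > γ·k for every x ∈ F₂^m. -/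

import Mathlib

/-!
Stacking `a` copies of `B` and `z` multiplies every violated equation by `a`, so the objective
becomes `a · ‖B x - z‖₀ + ‖x‖₀`. A solution of weight `≤ k` has objective `≤ k`; otherwise either
`‖x‖₀ > γ k` already, or `B x ≠ z` and the first term alone is at least `a > γ k`.
-/

open Finset Matrix

theorem hammingNorm_comp_snd {ι κ β : Type*} [Fintype ι] [Fintype κ] [Zero β] [DecidableEq β]
    (f : κ → β) : hammingNorm (fun p : ι × κ => f p.2) = Fintype.card ι * hammingNorm f := by
  have : univ.filter (fun p : ι × κ => f p.2 ≠ 0) = univ ×ˢ univ.filter (f · ≠ 0) := by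
    ext; simp
  rw [hammingNorm, hammingNorm, this, card_product, card_univ]

theorem mulVec_of_comp_snd {ι κ μ R : Type*} [Fintype μ] [NonUnitalNonAssocSemiring R]
    (B : Matrix κ μ R) (x : μ → R) :
    (Matrix.of fun (p : ι × κ) j => B p.2 j) *ᵥ x = fun p => (B *ᵥ x) p.2 :=
  rfl

theorem hammingNorm_stacked_residual {ι κ μ R : Type*} [Fintype ι] [Fintype κ] [Fintype μ]
    [NonUnitalNonAssocRing R] [DecidableEq R] (B : Matrix κ μ R) (z : κ → R) (x : μ → R) :
    hammingNorm ((Matrix.of fun (p : ι × κ) j => B p.2 j) *ᵥ x - fun p => z p.2)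
      = Fintype.card ι * hammingNorm (B *ᵥ x - z) := by
  rw [mulVec_of_comp_snd, ← hammingNorm_comp_snd]
  rfl

theorem stmt8 (n m k a : ℕ)
    (γ : ℝ) (haγ : (a : ℝ) > γ * k)
    (B : Matrix (Fin n) (Fin m) (ZMod 2)) (z : Fin n → ZMod 2)
    (A : Matrix (Fin a × Fin n) (Fin m) (ZMod 2))
    (hA : A = Matrix.of fun p j => B p.2 j)
    (y : Fin a × Fin n → ZMod 2) (hy : y = fun p => z p.2) :
    ((∃ x : Fin m → ZMod 2, hammingNorm x ≤ k ∧ B.mulVec x = z) →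
      ∃ x : Fin m → ZMod 2, hammingNorm (A.mulVec x - y) + hammingNorm x ≤ k) ∧
    ((∀ x : Fin m → ZMod 2, (hammingNorm x : ℝ) ≤ γ * k → B.mulVec x ≠ z) →
      ∀ x : Fin m → ZMod 2,
        γ * k < ((hammingNorm (A.mulVec x - y) + hammingNorm x : ℕ) : ℝ)) := by
  have objective (x : Fin m → ZMod 2) :
      hammingNorm (A *ᵥ x - y) + hammingNorm x = a * hammingNorm (B *ᵥ x - z) + hammingNorm x := by
    rw [hA, hy, hammingNorm_stacked_residual, Fintype.card_fin]
  refine ⟨fun ⟨x, hx, hBx⟩ => ⟨x, by simpa [objective, hBx] using hx⟩, fun hB x => ?_⟩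
  rw [objective]
  push_cast
  by_cases hx : (hammingNorm x : ℝ) ≤ γ * k
  · have hres : 1 ≤ hammingNorm (B *ᵥ x - z) :=
      hammingNorm_pos_iff.mpr (sub_ne_zero.mpr (hB x hx))
    have : (a : ℝ) ≤ a * hammingNorm (B *ᵥ x - z) := by
      exact_mod_cast Nat.le_mul_of_pos_right a hres
    linarith [(hammingNorm x).cast_nonneg (α := ℝ)]
  · have : (0 : ℝ) ≤ a * hammingNorm (B *ᵥ x - z) := by positivity
    linarith
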